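/- Let a ≥ 1 and b ≥ 2 be integers. If x ∈ Λ^{a+b} satisfies σ(x) > b·x_{a+b} and x_{a+b} ≥ 2·x_a, then y = T_{a,b}(x) satisfies σ(y) > b·y_{a+b}. -/

import Mathlib

open MeasureTheory Filter Topology

/-- `Λⁿ`: points of `ℝⁿ` with nonnegative, nondecreasing coordinates. -/
def Lambda (n : ℕ) : Set (Fin n → ℝ) := {x | (∀ i, 0 ≤ x i) ∧ Monotone x}

/-- The vector `(x₁,…,x_a, x_{a+1}-x_a,…,x_{a+b}-x_a)` (0-based indexing). -/
noncomputable def subVec (a b : ℕ) (x : Fin (a + b) → ℝ) : Fin (a + b) → ℝ :=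
  fun j => if (j : ℕ) < a then x j else x j - x ⟨a - 1, by have := j.isLt; omega⟩

/-- The map `T_{a,b}`: nondecreasing rearrangement of `subVec a b x`. -/
noncomputable def Tab (a b : ℕ) (x : Fin (a + b) → ℝ) : Fin (a + b) → ℝ :=
  subVec a b x ∘ Tuple.sort (subVec a b x)

/-!
Subtracting `x_a` from the last `b` coordinates lowers the sum by exactly `b·x_a`, and
rearranging does not change it. Since `x` is nondecreasing, every coordinate of the new
vector is at most `max (x_a, x_{a+b} - x_a)`, which is `x_{a+b} - x_a` when `x_{a+b} ≥ 2·x_a`.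
Hence `b·y_{a+b} ≤ b·x_{a+b} - b·x_a < σ(x) - b·x_a = σ(y)`.
-/

theorem sum_Tab (a b : ℕ) (x : Fin (a + b) → ℝ) : ∑ i, Tab a b x i = ∑ i, subVec a b x i :=
  Equiv.sum_comp (Tuple.sort (subVec a b x)) (subVec a b x)

theorem subVec_castAdd (a b : ℕ) (x : Fin (a + b) → ℝ) (i : Fin a) :
    subVec a b x (Fin.castAdd b i) = x (Fin.castAdd b i) :=
  if_pos i.is_lt

theorem subVec_natAdd (a b : ℕ) (ha : 0 < a) (x : Fin (a + b) → ℝ) (i : Fin b) :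
    subVec a b x (Fin.natAdd a i) = x (Fin.natAdd a i) - x ⟨a - 1, by omega⟩ :=
  if_neg (by simp)

theorem sum_subVec (a b : ℕ) (ha : 0 < a) (x : Fin (a + b) → ℝ) :
    ∑ i, subVec a b x i = ∑ i, x i - b * x ⟨a - 1, by omega⟩ := by
  simp only [Fin.sum_univ_add, subVec_castAdd, subVec_natAdd a b ha, Finset.sum_sub_distrib,
    Finset.sum_const, Finset.card_univ, Fintype.card_fin, nsmul_eq_mul]
  ring

theorem subVec_le_max (a b : ℕ) (ha : 0 < a) (x : Fin (a + b) → ℝ) (hx : Monotone x)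
    (j : Fin (a + b)) :
    subVec a b x j ≤
      max (x ⟨a - 1, by omega⟩) (x ⟨a + b - 1, by omega⟩ - x ⟨a - 1, by omega⟩) := by
  unfold subVec
  split_ifs with hj
  · exact le_max_of_le_left (hx (Fin.mk_le_mk.mpr (by omega)))
  · exact le_max_of_le_right (sub_le_sub_right (hx (Fin.mk_le_mk.mpr (by omega))) _)

/-- if `x ∈ Λ^{a+b}` satisfies `σ(x) > b·x_{a+b}` and
`x_{a+b} ≥ 2·x_a`, then `y = T_{a,b}(x)` satisfies `σ(y) > b·y_{a+b}`. -/
theorem statement15 (a b : ℕ) (ha : 1 ≤ a)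
    (x : Fin (a + b) → ℝ) (hx : x ∈ Lambda (a + b))
    (h1 : (b : ℝ) * x ⟨a + b - 1, by omega⟩ < ∑ i, x i)
    (h2 : 2 * x ⟨a - 1, by omega⟩ ≤ x ⟨a + b - 1, by omega⟩) :
    (b : ℝ) * Tab a b x ⟨a + b - 1, by omega⟩ < ∑ i, Tab a b x i := by
  have hlast : Tab a b x ⟨a + b - 1, by omega⟩ ≤
      x ⟨a + b - 1, by omega⟩ - x ⟨a - 1, by omega⟩ := by
    refine (subVec_le_max a b ha x hx.2 _).trans (max_le ?_ le_rfl)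
    linarith
  rw [sum_Tab, sum_subVec a b ha]
  linarith [mul_le_mul_of_nonneg_left hlast (Nat.cast_nonneg (α := ℝ) b)]
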